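/- If A is a 2×2 complex matrix with A†A ≤ I (i.e., I − A†A positive semidefinite), and Ā = √(I − A†A), then |det(A)| + |det(Ā)| ≤ 1. -/

import Mathlib

open Matrix ComplexOrder

namespace Matrix.PosSemidef

/-- The positive semidefinite square root of a positive semidefinite matrix
(Mathlib's former `Matrix.PosSemidef.sqrt`, restored with its old definition). -/
noncomputable def sqrt {n : Type*} [Fintype n] [DecidableEq n] {𝕜 : Type*} [RCLike 𝕜]
    {A : Matrix n n 𝕜} (hA : A.PosSemidef) : Matrix n n 𝕜 :=
  (hA.1.eigenvectorUnitary : Matrix n n 𝕜) *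
    diagonal (((↑) : ℝ → 𝕜) ∘ Real.sqrt ∘ hA.1.eigenvalues) *
  (star hA.1.eigenvectorUnitary : Matrix n n 𝕜)

end Matrix.PosSemidef

/-!
With `B = Aᴴ A`, `x = |det A|`, `y = |det Ā|` and `t = re (tr B)`: since `det Ā ≥ 0` and
`Ā² = 1 - B`, the `2 × 2` identity `det (1 - B) = 1 - tr B + det B` together with
`det B = x²` gives `y² = 1 - t + x²`. The entrywise AM–GM inequality gives `2x ≤ t`, and
`tr (1 - B) ≥ 0` gives `t ≤ 2`; hence `y² ≤ (1 - x)²` with `1 - x ≥ 0`.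
-/

namespace Matrix.PosSemidef

variable {n 𝕜 : Type*} [Fintype n] [DecidableEq n] [RCLike 𝕜] {M : Matrix n n 𝕜}

lemma sqrt_mul_self (hM : M.PosSemidef) : hM.sqrt * hM.sqrt = M := by
  set U : Matrix n n 𝕜 := (hM.1.eigenvectorUnitary : Matrix n n 𝕜)
  have hU : star U * U = 1 := Unitary.coe_star_mul_self _
  have hD : diagonal (((↑) : ℝ → 𝕜) ∘ Real.sqrt ∘ hM.1.eigenvalues) *
      diagonal (((↑) : ℝ → 𝕜) ∘ Real.sqrt ∘ hM.1.eigenvalues) =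
      diagonal (((↑) : ℝ → 𝕜) ∘ hM.1.eigenvalues) := by
    rw [diagonal_mul_diagonal]
    congr 1 with i
    simp [← RCLike.ofReal_mul, Real.mul_self_sqrt (hM.eigenvalues_nonneg i)]
  conv_rhs => rw [hM.1.spectral_theorem, Unitary.conjStarAlgAut_apply, ← hD]
  simp only [sqrt, mul_assoc]
  rw [← mul_assoc (star U) U, hU, one_mul]

lemma posSemidef_sqrt (hM : M.PosSemidef) : hM.sqrt.PosSemidef :=
  (PosSemidef.diagonal fun i ↦ by simp).mul_mul_conjTranspose_same _

lemma ofReal_norm_det_sqrt_sq (hM : M.PosSemidef) :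
    ((‖hM.sqrt.det‖ ^ 2 : ℝ) : 𝕜) = M.det := by
  rw [RCLike.ofReal_pow, RCLike.norm_of_nonneg' hM.posSemidef_sqrt.det_nonneg, sq, ← det_mul,
    hM.sqrt_mul_self]

end Matrix.PosSemidef

namespace Matrix

variable {n 𝕜 : Type*} [Fintype n] [RCLike 𝕜]

lemma re_trace_conjTranspose_mul_self (A : Matrix n n 𝕜) :
    RCLike.re (Aᴴ * A).trace = ∑ i, ∑ j, ‖A j i‖ ^ 2 := by
  simp only [trace, diag_apply, mul_apply, conjTranspose_apply, RCLike.star_def, RCLike.conj_mul,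
    map_sum, ← RCLike.ofReal_pow, RCLike.ofReal_re]

variable [DecidableEq n]

lemma det_conjTranspose_mul_self (A : Matrix n n 𝕜) :
    (Aᴴ * A).det = ((‖A.det‖ ^ 2 : ℝ) : 𝕜) := by
  rw [det_mul, det_conjTranspose, RCLike.star_def, RCLike.conj_mul, RCLike.ofReal_pow]

lemma det_one_sub_fin_two {R : Type*} [CommRing R] (M : Matrix (Fin 2) (Fin 2) R) :
    (1 - M).det = 1 - M.trace + M.det := by
  simp [det_fin_two, trace_fin_two]
  ring

lemma re_trace_le_card_of_posSemidef_one_sub {M : Matrix n n 𝕜} (h : (1 - M).PosSemidef) :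
    RCLike.re M.trace ≤ Fintype.card n := by
  have := (RCLike.nonneg_iff.mp h.trace_nonneg).1
  simpa [trace_sub] using this

lemma two_mul_norm_det_le_re_trace_conjTranspose_mul_self (A : Matrix (Fin 2) (Fin 2) 𝕜) :
    2 * ‖A.det‖ ≤ RCLike.re (Aᴴ * A).trace := by
  have hdet : ‖A.det‖ ≤ ‖A 0 0‖ * ‖A 1 1‖ + ‖A 0 1‖ * ‖A 1 0‖ := by
    rw [det_fin_two, ← norm_mul, ← norm_mul]
    exact norm_sub_le _ _
  rw [re_trace_conjTranspose_mul_self, Fin.sum_univ_two, Fin.sum_univ_two, Fin.sum_univ_two]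
  nlinarith [sq_nonneg (‖A 0 0‖ - ‖A 1 1‖), sq_nonneg (‖A 0 1‖ - ‖A 1 0‖)]

end Matrix

lemma add_le_one_of_sq_eq_one_sub_add_sq {x y t : ℝ} (hxy : y ^ 2 = 1 - t + x ^ 2)
    (h2x : 2 * x ≤ t) (ht : t ≤ 2) : x + y ≤ 1 := by
  have hsq : y ^ 2 ≤ (1 - x) ^ 2 := by linarith
  linarith [(abs_le_of_sq_le_sq' hsq (by linarith)).2]

/-- if `A` is a `2×2` complex matrix with `A†A ≤ I` and
`Ā = √(I − A†A)`, then `|det A| + |det Ā| ≤ 1`. -/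
theorem det_measurement_bound_two (A : Matrix (Fin 2) (Fin 2) ℂ)
    (h : (1 - Aᴴ * A).PosSemidef) :
    ‖A.det‖ + ‖h.sqrt.det‖ ≤ 1 := by
  have hy := congrArg Complex.re h.ofReal_norm_det_sqrt_sq
  rw [det_one_sub_fin_two, det_conjTranspose_mul_self] at hy
  simp only [Complex.add_re, Complex.sub_re, Complex.one_re] at hy
  refine add_le_one_of_sq_eq_one_sub_add_sq hy
    (two_mul_norm_det_le_re_trace_conjTranspose_mul_self A) ?_
  simpa using re_trace_le_card_of_posSemidef_one_sub h
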